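/- Let (H,{F_A},{F_G}) be a GR(1) game with singleton winning conditions, Z^∞ = ⟦φ₄⟧, and f¹ the memoryless strategy extracted from the rank. Then Z^∞ is invariant under play: for every q ∈ Z^∞, if q ∈ Q⁰ then δ⁰(q) ⊆ Z^∞, and if q ∈ Q¹ then f¹(q) ∈ Z^∞. -/
import Mathlib


namespace GR1

/-- A two-player game graph `H = ⟨Q⁰, Q¹, δ⁰, δ¹, q₀⟩`.  `env` is the set `Q⁰` of
environment states, `sys` the set `Q¹` of system states, and `delta` combines the
transition functions `δ⁰` and `δ¹`. -/
structure GameGraph (Q : Type*) where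
  env : Set Q
  sys : Set Q
  delta : Q → Set Q
  disjoint_env_sys : Disjoint env sys
  union_env_sys : env ∪ sys = Set.univ
  delta_env : ∀ q ∈ env, delta q ⊆ sys
  delta_sys : ∀ q ∈ sys, delta q ⊆ env
  delta_nonempty : ∀ q, (delta q).Nonempty
  init : Q
  init_env : init ∈ env

namespace GameGraph

/-- The existential predecessor operator `Pre∃`. -/
def PreE {Q : Type*} (G : GameGraph Q) (P : Set Q) : Set Q :=
  {q | (G.delta q ∩ P).Nonempty}

/-- The universal predecessor operator `Pre∀`. -/
def PreA {Q : Type*} (G : GameGraph Q) (P : Set Q) : Set Q :=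
  {q | G.delta q ⊆ P}

/-- The player-0 (environment) controllable predecessor operator `Pre⁰`. -/
def Pre0 {Q : Type*} (G : GameGraph Q) (P : Set Q) : Set Q :=
  {q | q ∈ G.env ∧ (G.delta q ∩ P).Nonempty} ∪ {q | q ∈ G.sys ∧ G.delta q ⊆ P}

/-- The player-1 (system) controllable predecessor operator `Pre¹`. -/
def Pre1 {Q : Type*} (G : GameGraph Q) (P : Set Q) : Set Q :=
  {q | q ∈ G.env ∧ G.delta q ⊆ P} ∪ {q | q ∈ G.sys ∧ (G.delta q ∩ P).Nonempty}

/-- The conditional predecessor `Precond(P,P') = Pre∃(P) ∩ Pre¹(P ∪ P')`. -/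
def Precond {Q : Type*} (G : GameGraph Q) (P P' : Set Q) : Set Q :=
  G.PreE P ∩ G.Pre1 (P ∪ P')

/-- The dual conditional predecessor `Precondᶜ(P,P') = Pre∀(P) ∪ Pre⁰(P ∩ P')`. -/
def PrecondC {Q : Type*} (G : GameGraph Q) (P P' : Set Q) : Set Q :=
  G.PreA P ∪ G.Pre0 (P ∩ P')

end GameGraph

/-- Knaster–Tarski least fixed point over the powerset lattice. -/
def lfpSet {Q : Type*} (F : Set Q → Set Q) : Set Q := ⋂₀ {S | F S ⊆ S}

/-- Knaster–Tarski greatest fixed point over the powerset lattice. -/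
def gfpSet {Q : Type*} (F : Set Q → Set Q) : Set Q := ⋃₀ {S | S ⊆ F S}

/-- Knaster–Tarski least fixed point over the lattice of vectors of sets. -/
def lfpVec {Q : Type*} {n : ℕ} (F : (Fin n → Set Q) → (Fin n → Set Q)) : Fin n → Set Q :=
  fun a => ⋂ V ∈ {V : Fin n → Set Q | ∀ a', F V a' ⊆ V a'}, V a

/-- Knaster–Tarski greatest fixed point over the lattice of vectors of sets. -/
def gfpVec {Q : Type*} {n : ℕ} (F : (Fin n → Set Q) → (Fin n → Set Q)) : Fin n → Set Q :=
  fun a => ⋃ V ∈ {V : Fin n → Set Q | ∀ a', V a' ⊆ F V a'}, V a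

/-- Cyclic successor of a mode: `a⁺ = (a mod n) + 1` in 1-based counting. -/
def modeSucc {n : ℕ} (a : Fin n) : Fin n :=
  ⟨(a.val + 1) % n, Nat.mod_lt _ a.pos⟩

/-- `π` is an (infinite) play over `G` starting in the state `q`. -/
def IsPlayFrom {Q : Type*} (G : GameGraph Q) (q : Q) (π : ℕ → Q) : Prop :=
  π 0 = q ∧ ∀ k, π (k + 1) ∈ G.delta (π k)

/-- `Inf(π) ∩ F ≠ ∅` : the play `π` visits the set `F` infinitely often. -/
def InfOft {Q : Type*} (π : ℕ → Q) (F : Set Q) : Prop := ∀ n, ∃ k, n ≤ k ∧ π k ∈ F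

/-- `L_q(H,F)` : plays from `q` satisfying the Büchi condition `F`. -/
def LBuchi {Q : Type*} (G : GameGraph Q) (q : Q) (F : Set Q) : Set (ℕ → Q) :=
  {π | IsPlayFrom G q π ∧ InfOft π F}

/-- `L_q(H,𝓕)` : plays from `q` satisfying the generalized Büchi condition `𝓕`. -/
def LGenBuchi {Q ι : Type*} (G : GameGraph Q) (q : Q) (F : ι → Set Q) : Set (ℕ → Q) :=
  {π | IsPlayFrom G q π ∧ ∀ i, InfOft π (F i)}

/-- `Pre(L)` : the set of all finite prefixes of the (infinite) words in `L`. -/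
def prefixes {Q : Type*} (L : Set (ℕ → Q)) : Set (List Q) :=
  {w | ∃ π ∈ L, ∃ k, w = (List.range k).map π}

/-- A (history dependent) system strategy: on a history ending in a system state it
produces a `δ¹`-successor of that state. -/
def IsSysStrategy {Q : Type*} (G : GameGraph Q) (f : List Q → Q) : Prop :=
  ∀ (w : List Q) (q : Q), q ∈ G.sys → f (w ++ [q]) ∈ G.delta q

/-- The finite history `π|_{[0,k]}` of a play. -/
def histUpTo {Q : Type*} (π : ℕ → Q) (k : ℕ) : List Q := (List.range (k + 1)).map π

/-- `L_q(H,f¹)` : plays from `q` compliant with the system strategy `f¹`. -/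
def Lstrat {Q : Type*} (G : GameGraph Q) (q : Q) (f : List Q → Q) : Set (ℕ → Q) :=
  {π | IsPlayFrom G q π ∧ ∀ k, π k ∈ G.sys → π (k + 1) = f (histUpTo π k)}

/-- `L_q(H,f¹)` for a memoryless system strategy `f¹ : Q → Q`. -/
def Lmem {Q : Type*} (G : GameGraph Q) (q : Q) (f : Q → Q) : Set (ℕ → Q) :=
  {π | IsPlayFrom G q π ∧ ∀ k, π k ∈ G.sys → π (k + 1) = f (π k)}

/-- Strict lexicographic order on ranks. -/
def rankLt (p r : ℕ × ℕ) : Prop := p.1 < r.1 ∨ (p.1 = r.1 ∧ p.2 < r.2)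

/-- Lexicographic order on ranks. -/
def rankLe (p r : ℕ × ℕ) : Prop := p.1 < r.1 ∨ (p.1 = r.1 ∧ p.2 ≤ r.2)

/-! ### The 4-nested fixed point `φ₄` for singleton winning conditions -/

/-- The body `(F_G ∩ Pre¹(Z)) ∪ Pre¹(Y) ∪ ((Q∖F_A) ∩ Precond(W, X∖F_A))`. -/
def body {Q : Type*} (G : GameGraph Q) (FA FG Z Y X W : Set Q) : Set Q :=
  (FG ∩ G.Pre1 Z) ∪ G.Pre1 Y ∪ (FAᶜ ∩ G.Precond W (X \ FA))

def innerW {Q : Type*} (G : GameGraph Q) (FA FG Z Y X : Set Q) : Set Q :=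
  lfpSet (fun W => body G FA FG Z Y X W)

def innerX {Q : Type*} (G : GameGraph Q) (FA FG Z Y : Set Q) : Set Q :=
  gfpSet (fun X => innerW G FA FG Z Y X)

def innerY {Q : Type*} (G : GameGraph Q) (FA FG Z : Set Q) : Set Q :=
  lfpSet (fun Y => innerX G FA FG Z Y)

/-- `⟦φ₄⟧ = Z^∞` : the value of `νZ.μY.νX.μW. (F_G ∩ Pre¹(Z)) ∪ Pre¹(Y) ∪
((Q∖F_A) ∩ Precond(W, X∖F_A))`. -/
def phi4 {Q : Type*} (G : GameGraph Q) (FA FG : Set Q) : Set Q :=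
  gfpSet (fun Z => innerY G FA FG Z)

/-- The approximants `Yⁱ` of `Y` in the terminal iteration over `Z` (`Y⁰ = ∅`). -/
def Yapprox {Q : Type*} (G : GameGraph Q) (FA FG : Set Q) : ℕ → Set Q
  | 0 => ∅
  | i + 1 => innerX G FA FG (phi4 G FA FG) (Yapprox G FA FG i)

/-- The approximants `Wⁱ_j` of `W` computed with `X = Xⁱ = Yⁱ` and `Y = Yⁱ⁻¹`. -/
def Wapprox {Q : Type*} (G : GameGraph Q) (FA FG : Set Q) (i : ℕ) : ℕ → Set Q
  | 0 => ∅
  | j + 1 =>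
      body G FA FG (phi4 G FA FG) (Yapprox G FA FG (i - 1)) (Yapprox G FA FG i)
        (Wapprox G FA FG i j)

/-- `rank(q) = (i,j)` iff `q ∈ (Yⁱ∖Yⁱ⁻¹) ∩ (Wⁱ_j∖Wⁱ_{j−1})` with `i,j > 0`. -/
def hasRank {Q : Type*} (G : GameGraph Q) (FA FG : Set Q) (q : Q) (i j : ℕ) : Prop :=
  0 < i ∧ 0 < j ∧
    q ∈ (Yapprox G FA FG i \ Yapprox G FA FG (i - 1)) ∩
        (Wapprox G FA FG i j \ Wapprox G FA FG i (j - 1))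

/-- The memoryless system strategy extracted from the ranking: `f¹(q) ∈ δ¹(q)`,
`rank(f¹(q)) < rank(q)` whenever `rank(q) > (1,1)`, and `f¹(q) ∈ Z^∞` otherwise. -/
def GoodStrategy {Q : Type*} (G : GameGraph Q) (FA FG : Set Q) (f : Q → Q) : Prop :=
  ∀ q, q ∈ G.sys → q ∈ phi4 G FA FG →
    f q ∈ G.delta q ∧
      ∀ i j, hasRank G FA FG q i j →
        (((i, j) = ((1 : ℕ), (1 : ℕ)) → f q ∈ phi4 G FA FG) ∧
          ((i, j) ≠ ((1 : ℕ), (1 : ℕ)) →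
            ∃ i' j', hasRank G FA FG (f q) i' j' ∧ rankLt (i', j') (i, j)))

/-! ### The negated fixed point `φ̄₄` (singleton conditions) -/

/-- The simplified negated body
`Pre⁰(Z̄) ∪ ((Q∖F_G) ∩ F_A ∩ Pre⁰(Ȳ)) ∪ ((Q∖F_G) ∩ Precondᶜ(W̄, X̄ ∪ F_A))`. -/
def nbody {Q : Type*} (G : GameGraph Q) (FA FG Z Y X W : Set Q) : Set Q :=
  G.Pre0 Z ∪ (FGᶜ ∩ FA ∩ G.Pre0 Y) ∪ (FGᶜ ∩ G.PrecondC W (X ∪ FA))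

/-- The simplified negated fixed point `φ̄₄ = μZ̄.νȲ.μX̄.νW̄. nbody`. -/
def phi4neg {Q : Type*} (G : GameGraph Q) (FA FG : Set Q) : Set Q :=
  lfpSet (fun Z => gfpSet (fun Y => lfpSet (fun X => gfpSet (fun W =>
    nbody G FA FG Z Y X W))))

/-- The unsimplified negation body
`((Q∖F_G) ∪ Pre⁰(Z̄)) ∩ Pre⁰(Ȳ) ∩ (F_A ∪ Precondᶜ(W̄, X̄ ∪ F_A))`. -/
def nbodyRaw {Q : Type*} (G : GameGraph Q) (FA FG Z Y X W : Set Q) : Set Q :=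
  (FGᶜ ∪ G.Pre0 Z) ∩ G.Pre0 Y ∩ (FA ∪ G.PrecondC W (X ∪ FA))

/-- The unsimplified negated fixed point. -/
def phi4negRaw {Q : Type*} (G : GameGraph Q) (FA FG : Set Q) : Set Q :=
  lfpSet (fun Z => gfpSet (fun Y => lfpSet (fun X => gfpSet (fun W =>
    nbodyRaw G FA FG Z Y X W))))

/-- The approximants `Z̄ⁱ` of the negated fixed point (`Z̄⁰ = ∅`). -/
def Zbar {Q : Type*} (G : GameGraph Q) (FA FG : Set Q) : ℕ → Set Q
  | 0 => ∅
  | i + 1 =>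
      gfpSet (fun Y => lfpSet (fun X => gfpSet (fun W =>
        nbody G FA FG (Zbar G FA FG i) Y X W)))

/-- The approximants `X̄ⁱ_j` of `X̄` computed while computing `Z̄ⁱ` (using `Ȳ = Z̄ⁱ` and
`Z̄ = Z̄ⁱ⁻¹`), with `X̄ⁱ₀ = ∅`. -/
def Xbar {Q : Type*} (G : GameGraph Q) (FA FG : Set Q) (i : ℕ) : ℕ → Set Q
  | 0 => ∅
  | j + 1 =>
      gfpSet (fun W =>
        nbody G FA FG (Zbar G FA FG (i - 1)) (Zbar G FA FG i) (Xbar G FA FG i j) W)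

/-- The negated rank: `rank(q) = (i,j)` iff `q ∈ X̄ⁱ_j ∖ X̄ⁱ_{j−1}` with `i,j > 0`. -/
def nrank {Q : Type*} (G : GameGraph Q) (FA FG : Set Q) (q : Q) (i j : ℕ) : Prop :=
  0 < i ∧ 0 < j ∧ q ∈ Xbar G FA FG i j \ Xbar G FA FG i (j - 1)

/-- Environment moves permitted during the inductive construction of the reachable
region `R_{f¹}` (cases (a'), (b'), (c'2), (c'3) and the remaining case (c'1)). -/
def envStep {Q : Type*} (G : GameGraph Q) (FA FG : Set Q) (q' q'' : Q) : Prop :=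
  q'' ∈ G.delta q' ∧
    ∃ i j, nrank G FA FG q' i j ∧
      ((q'' ∈ (phi4 G FA FG)ᶜ ∧ ∃ i' j', nrank G FA FG q'' i' j' ∧ i' ≤ i - 1) ∨
       (q' ∈ FA \ FG ∧ q'' ∈ (phi4 G FA FG)ᶜ ∧
          ∃ i' j', nrank G FA FG q'' i' j' ∧ i' ≤ i) ∨
       (q'' ∈ (phi4 G FA FG)ᶜ ∧
          ∃ i' j', nrank G FA FG q'' i' j' ∧ rankLe (i', j') (i, j - 1)) ∨
       (q'' ∈ (phi4 G FA FG)ᶜ ∧ q'' ∈ FA ∧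
          ∃ i' j', nrank G FA FG q'' i' j' ∧ rankLe (i', j') (i, j)) ∨
       (∀ p ∈ G.delta q', p ∈ (phi4 G FA FG)ᶜ ∧
          ∃ i' j', nrank G FA FG p i' j' ∧ rankLe (i', j') (i, j)))

/-- `L_q(H,f¹,R_{f¹})` : plays from `q` compliant with `f¹` that remain within the
reachable region `R_{f¹}`, i.e. in which every environment move follows the rules of
the inductive construction of `R_{f¹}`. -/
def Lrestr {Q : Type*} (G : GameGraph Q) (FA FG : Set Q) (q : Q) (f : List Q → Q) :
    Set (ℕ → Q) :=
  {π | π ∈ Lstrat G q f ∧ ∀ k, π k ∈ G.env → envStep G FA FG (π k) (π (k + 1))}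

/-! ### The vectorized fixed point `φ₄ᵛ` for general GR(1) conditions -/

/-- The body `Ω^{ab}` of the vectorized fixed point. -/
def bodyV {Q : Type*} {n m : ℕ} (G : GameGraph Q) (FAv : Fin m → Set Q)
    (FGv : Fin n → Set Q) (Zv : Fin n → Set Q) (a : Fin n) (b : Fin m)
    (Y X W : Set Q) : Set Q :=
  (FGv a ∩ G.Pre1 (Zv (modeSucc a))) ∪ G.Pre1 Y ∪ ((FAv b)ᶜ ∩ G.Precond W (X \ FAv b))

def innerWV {Q : Type*} {n m : ℕ} (G : GameGraph Q) (FAv : Fin m → Set Q)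
    (FGv : Fin n → Set Q) (Zv : Fin n → Set Q) (a : Fin n) (b : Fin m)
    (Y X : Set Q) : Set Q :=
  lfpSet (fun W => bodyV G FAv FGv Zv a b Y X W)

def innerXV {Q : Type*} {n m : ℕ} (G : GameGraph Q) (FAv : Fin m → Set Q)
    (FGv : Fin n → Set Q) (Zv : Fin n → Set Q) (a : Fin n) (b : Fin m)
    (Y : Set Q) : Set Q :=
  gfpSet (fun X => innerWV G FAv FGv Zv a b Y X)

/-- The vector `[Z¹,…,Zⁿ]` of the vectorized fixed point `φ₄ᵛ`. -/
def phi4v {Q : Type*} {n m : ℕ} (G : GameGraph Q) (FAv : Fin m → Set Q)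
    (FGv : Fin n → Set Q) : Fin n → Set Q :=
  gfpVec (fun Zv a => lfpSet (fun Y => ⋃ b, innerXV G FAv FGv Zv a b Y))

/-- `⟦φ₄ᵛ⟧ = Z^∞ = ⋃_a Zᵃ^∞`. -/
def phi4vSem {Q : Type*} {n m : ℕ} (G : GameGraph Q) (FAv : Fin m → Set Q)
    (FGv : Fin n → Set Q) : Set Q :=
  ⋃ a, phi4v G FAv FGv a

/-- The approximants `ᵃYⁱ` (with `ᵃY⁰ = ∅`) of `Yᵃ` in the terminal iteration. -/
def YapproxV {Q : Type*} {n m : ℕ} (G : GameGraph Q) (FAv : Fin m → Set Q)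
    (FGv : Fin n → Set Q) (a : Fin n) : ℕ → Set Q
  | 0 => ∅
  | i + 1 => ⋃ b, innerXV G FAv FGv (phi4v G FAv FGv) a b (YapproxV G FAv FGv a i)

/-- The fixed point `ᵃᵇXⁱ` of `X^{ab}` computed during the `i`-th iteration. -/
def XfixV {Q : Type*} {n m : ℕ} (G : GameGraph Q) (FAv : Fin m → Set Q)
    (FGv : Fin n → Set Q) (a : Fin n) (b : Fin m) (i : ℕ) : Set Q :=
  innerXV G FAv FGv (phi4v G FAv FGv) a b (YapproxV G FAv FGv a (i - 1))

/-- The approximants `ᵃᵇWⁱ_j` of `W^{ab}` computed while computing `ᵃYⁱ`. -/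
def WapproxV {Q : Type*} {n m : ℕ} (G : GameGraph Q) (FAv : Fin m → Set Q)
    (FGv : Fin n → Set Q) (a : Fin n) (b : Fin m) (i : ℕ) : ℕ → Set Q
  | 0 => ∅
  | j + 1 =>
      bodyV G FAv FGv (phi4v G FAv FGv) a b (YapproxV G FAv FGv a (i - 1))
        (XfixV G FAv FGv a b i) (WapproxV G FAv FGv a b i j)

/-- The mode-based rank: `ᵃᵇrank(q) = (i,j)` iff
`q ∈ (ᵃYⁱ∖ᵃYⁱ⁻¹) ∩ (ᵃᵇWⁱ_j∖ᵃᵇWⁱ_{j−1})` with `i,j > 0`. -/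
def hasRankV {Q : Type*} {n m : ℕ} (G : GameGraph Q) (FAv : Fin m → Set Q)
    (FGv : Fin n → Set Q) (a : Fin n) (b : Fin m) (q : Q) (i j : ℕ) : Prop :=
  0 < i ∧ 0 < j ∧
    q ∈ (YapproxV G FAv FGv a i \ YapproxV G FAv FGv a (i - 1)) ∩
        (WapproxV G FAv FGv a b i j \ WapproxV G FAv FGv a b i (j - 1))

/-- The finite-memory system strategy extracted from the mode-based ranking. -/
def GoodStrategyV {Q : Type*} {n m : ℕ} (G : GameGraph Q) (FAv : Fin m → Set Q)
    (FGv : Fin n → Set Q) (f : Q × Fin n × Fin m → Q × Fin n × Fin m) : Prop :=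
  ∀ (q : Q) (a : Fin n) (b : Fin m), q ∈ G.sys → q ∈ phi4v G FAv FGv a →
    (f (q, a, b)).1 ∈ G.delta q ∧
      ∀ i j, hasRankV G FAv FGv a b q i j →
        (((i, j) = ((1 : ℕ), (1 : ℕ)) →
            (f (q, a, b)).1 ∈ phi4v G FAv FGv (modeSucc a) ∧
              (f (q, a, b)).2.1 = modeSucc a) ∧
          (1 < i ∧ j = 1 →
            (f (q, a, b)).2.1 = a ∧
              ∃ i' j',
                hasRankV G FAv FGv a ((f (q, a, b)).2.2) ((f (q, a, b)).1) i' j' ∧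
                  i' ≤ i - 1) ∧
          (1 < j →
            (f (q, a, b)).2.1 = a ∧ (f (q, a, b)).2.2 = b ∧
              ∃ i' j',
                hasRankV G FAv FGv a b ((f (q, a, b)).1) i' j' ∧
                  rankLe (i', j') (i, j - 1)))

/-- Compliance of a play with a finite-memory strategy via mode traces `α`, `β`. -/
def CompliantModeV {Q : Type*} {n m : ℕ} (G : GameGraph Q) (FAv : Fin m → Set Q)
    (FGv : Fin n → Set Q) (f : Q × Fin n × Fin m → Q × Fin n × Fin m)
    (π : ℕ → Q) (α : ℕ → Fin n) (β : ℕ → Fin m) : Prop :=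
  ∀ k,
    (π k ∈ G.sys → (π (k + 1), α (k + 1), β (k + 1)) = f (π k, α k, β k)) ∧
      (π k ∈ G.env →
        (hasRankV G FAv FGv (α k) (β k) (π (k + 1)) 1 1 →
            α (k + 1) = modeSucc (α k)) ∧
          ((∃ i, 1 < i ∧ hasRankV G FAv FGv (α k) (β k) (π (k + 1)) i 1) →
            α (k + 1) = α k) ∧
          ((∃ i j, 1 < j ∧ hasRankV G FAv FGv (α k) (β k) (π (k + 1)) i j) →
            α (k + 1) = α k ∧ β (k + 1) = β k))

/-- `L_q(H,f¹)` for a finite-memory strategy: plays from `q` compliant with `f¹`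
for some mode traces. -/
def LmodeV {Q : Type*} {n m : ℕ} (G : GameGraph Q) (FAv : Fin m → Set Q)
    (FGv : Fin n → Set Q) (q : Q) (f : Q × Fin n × Fin m → Q × Fin n × Fin m) :
    Set (ℕ → Q) :=
  {π | IsPlayFrom G q π ∧ ∃ α β, CompliantModeV G FAv FGv f π α β}

/-- `ᵃD = F_Gᵃ ∩ Pre¹(Z^{a⁺,∞})`. -/
def DsetV {Q : Type*} {n m : ℕ} (G : GameGraph Q) (FAv : Fin m → Set Q)
    (FGv : Fin n → Set Q) (a : Fin n) : Set Q :=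
  FGv a ∩ G.Pre1 (phi4v G FAv FGv (modeSucc a))

/-- `ᵃEⁱ = Pre¹(ᵃYⁱ⁻¹) ∖ ᵃYⁱ⁻¹`. -/
def EsetV {Q : Type*} {n m : ℕ} (G : GameGraph Q) (FAv : Fin m → Set Q)
    (FGv : Fin n → Set Q) (a : Fin n) (i : ℕ) : Set Q :=
  G.Pre1 (YapproxV G FAv FGv a (i - 1)) \ YapproxV G FAv FGv a (i - 1)

/-- `ᵃᵇΘⁱ_j = (Q∖F_Aᵇ) ∩ Precond(ᵃᵇWⁱ_{j−1}, ᵃᵇXⁱ∖F_Aᵇ)`. -/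
def ThetaV {Q : Type*} {n m : ℕ} (G : GameGraph Q) (FAv : Fin m → Set Q)
    (FGv : Fin n → Set Q) (a : Fin n) (b : Fin m) (i j : ℕ) : Set Q :=
  (FAv b)ᶜ ∩ G.Precond (WapproxV G FAv FGv a b i (j - 1)) (XfixV G FAv FGv a b i \ FAv b)

/-- `ᵃᵇRⁱ_j = ᵃᵇΘⁱ_j ∖ (ᵃᵇWⁱ_{j−1} ∪ ᵃYⁱ⁻¹ ∪ ᵃEⁱ ∪ ᵃD)`. -/
def RsetV {Q : Type*} {n m : ℕ} (G : GameGraph Q) (FAv : Fin m → Set Q)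
    (FGv : Fin n → Set Q) (a : Fin n) (b : Fin m) (i j : ℕ) : Set Q :=
  ThetaV G FAv FGv a b i j \
    (WapproxV G FAv FGv a b i (j - 1) ∪ YapproxV G FAv FGv a (i - 1) ∪
      EsetV G FAv FGv a i ∪ DsetV G FAv FGv a)

/-! ### The negated vectorized fixed point -/

/-- The body of the negated vectorized fixed point. -/
def nbodyV {Q : Type*} {n m : ℕ} (G : GameGraph Q) (FAv : Fin m → Set Q)
    (FGv : Fin n → Set Q) (Zv : Fin n → Set Q) (a : Fin n) (b : Fin m)
    (Y X W : Set Q) : Set Q :=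
  G.Pre0 (Zv (modeSucc a)) ∪ ((FGv a)ᶜ ∩ FAv b ∩ G.Pre0 Y) ∪
    ((FGv a)ᶜ ∩ G.PrecondC W (X ∪ FAv b))

/-- The coordinated approximants `Z̄ᵃⁱ` of the negated vectorized fixed point. -/
def ZbarV {Q : Type*} {n m : ℕ} (G : GameGraph Q) (FAv : Fin m → Set Q)
    (FGv : Fin n → Set Q) : ℕ → Fin n → Set Q
  | 0 => fun _ => ∅
  | i + 1 => fun a =>
      gfpSet (fun Y => ⋂ b, lfpSet (fun X => gfpSet (fun W =>
        nbodyV G FAv FGv (ZbarV G FAv FGv i) a b Y X W)))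

/-- The approximants `X̄^{ab,i}_j` of `X̄^{ab}` computed during the `i`-th iteration. -/
def XbarV {Q : Type*} {n m : ℕ} (G : GameGraph Q) (FAv : Fin m → Set Q)
    (FGv : Fin n → Set Q) (a : Fin n) (b : Fin m) (i : ℕ) : ℕ → Set Q
  | 0 => ∅
  | j + 1 =>
      gfpSet (fun W =>
        nbodyV G FAv FGv (ZbarV G FAv FGv (i - 1)) a b (ZbarV G FAv FGv i a)
          (XbarV G FAv FGv a b i j) W)

/-- The negated mode-based rank: `ᵃᵇrank(q) = (i,j)` iff `q ∈ X̄^{ab,i}_j∖X̄^{ab,i}_{j−1}`. -/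
def nrankV {Q : Type*} {n m : ℕ} (G : GameGraph Q) (FAv : Fin m → Set Q)
    (FGv : Fin n → Set Q) (a : Fin n) (b : Fin m) (q : Q) (i j : ℕ) : Prop :=
  0 < i ∧ 0 < j ∧ q ∈ XbarV G FAv FGv a b i j \ XbarV G FAv FGv a b i (j - 1)

/-- Environment moves permitted during the inductive construction of `R_{f¹}`
in the vectorized setting. -/
def envStepV {Q : Type*} {n m : ℕ} (G : GameGraph Q) (FAv : Fin m → Set Q)
    (FGv : Fin n → Set Q) (q' q'' : Q) : Prop :=
  q'' ∈ G.delta q' ∧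
    ∃ (a : Fin n) (b : Fin m) (i j : ℕ), nrankV G FAv FGv a b q' i j ∧
      ((q'' ∈ (phi4vSem G FAv FGv)ᶜ ∧
          ∃ b' i' j', nrankV G FAv FGv (modeSucc a) b' q'' i' j' ∧ i' ≤ i - 1) ∨
       (q' ∈ FAv b \ FGv a ∧ q'' ∈ (phi4vSem G FAv FGv)ᶜ ∧
          ∃ b' i' j', nrankV G FAv FGv a b' q'' i' j' ∧ i' ≤ i) ∨
       (q'' ∈ (phi4vSem G FAv FGv)ᶜ ∧
          ∃ i' j', nrankV G FAv FGv a b q'' i' j' ∧ rankLe (i', j') (i, j - 1)) ∨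
       (q'' ∈ (phi4vSem G FAv FGv)ᶜ ∧ q'' ∈ FAv b ∧
          ∃ i' j', nrankV G FAv FGv a b q'' i' j' ∧ rankLe (i', j') (i, j)) ∨
       (∀ p ∈ G.delta q', p ∈ (phi4vSem G FAv FGv)ᶜ ∧
          ∃ i' j', nrankV G FAv FGv a b p i' j' ∧ rankLe (i', j') (i, j)))

/-- `L_q(H,f¹,R_{f¹})` in the vectorized setting. -/
def LrestrV {Q : Type*} {n m : ℕ} (G : GameGraph Q) (FAv : Fin m → Set Q)
    (FGv : Fin n → Set Q) (q : Q) (f : List Q → Q) : Set (ℕ → Q) :=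
  {π | π ∈ Lstrat G q f ∧ ∀ k, π k ∈ G.env → envStepV G FAv FGv (π k) (π (k + 1))}
/-! ### Auxiliary lemmas for Statement 5 -/

section Aux

variable {Q : Type*}

lemma lfpSet_le {F : Set Q → Set Q} {S : Set Q} (h : F S ⊆ S) : lfpSet F ⊆ S :=
  Set.sInter_subset_of_mem h

lemma lfpSet_fixed {F : Set Q → Set Q} (hF : Monotone F) : F (lfpSet F) = lfpSet F := by
  have h1 : F (lfpSet F) ⊆ lfpSet F := by
    intro x hx
    refine Set.mem_sInter.2 fun S hS => hS (hF (lfpSet_le hS) hx)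
  exact h1.antisymm (lfpSet_le (hF h1))

lemma le_gfpSet {F : Set Q → Set Q} {S : Set Q} (h : S ⊆ F S) : S ⊆ gfpSet F :=
  Set.subset_sUnion_of_mem h

lemma gfpSet_fixed {F : Set Q → Set Q} (hF : Monotone F) : gfpSet F = F (gfpSet F) := by
  have h1 : gfpSet F ⊆ F (gfpSet F) := by
    intro x hx
    rcases Set.mem_sUnion.1 hx with ⟨S, hS, hxS⟩
    exact hF (le_gfpSet hS) (hS hxS)
  exact h1.antisymm (le_gfpSet (hF h1))

lemma lfpSet_mono {F F' : Set Q → Set Q} (h : ∀ S, F S ⊆ F' S) :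
    lfpSet F ⊆ lfpSet F' := by
  intro x hx
  exact Set.mem_sInter.2 fun S hS => Set.mem_sInter.1 hx S ((h S).trans hS)

lemma gfpSet_mono {F F' : Set Q → Set Q} (h : ∀ S, F S ⊆ F' S) :
    gfpSet F ⊆ gfpSet F' := by
  intro x hx
  rcases Set.mem_sUnion.1 hx with ⟨S, hS, hxS⟩
  exact le_gfpSet (hS.trans (h S)) hxS

lemma Pre1_mono (G : GameGraph Q) {P P' : Set Q} (h : P ⊆ P') : G.Pre1 P ⊆ G.Pre1 P' := by
  intro q hq
  simp only [GameGraph.Pre1, Set.mem_union, Set.mem_setOf_eq] at hq ⊢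
  rcases hq with hq | hq
  · exact Or.inl ⟨hq.1, hq.2.trans h⟩
  · exact Or.inr ⟨hq.1, hq.2.mono (Set.inter_subset_inter_right _ h)⟩

lemma PreE_mono (G : GameGraph Q) {P P' : Set Q} (h : P ⊆ P') : G.PreE P ⊆ G.PreE P' := by
  intro q hq
  exact Set.Nonempty.mono (Set.inter_subset_inter_right _ h) hq

lemma Precond_mono (G : GameGraph Q) {P P' S S' : Set Q} (hP : P ⊆ P') (hS : S ⊆ S') :
    G.Precond P S ⊆ G.Precond P' S' :=
  Set.inter_subset_inter (PreE_mono G hP) (Pre1_mono G (Set.union_subset_union hP hS))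

lemma body_mono (G : GameGraph Q) (FA FG : Set Q) {Z Z' Y Y' X X' W W' : Set Q}
    (hZ : Z ⊆ Z') (hY : Y ⊆ Y') (hX : X ⊆ X') (hW : W ⊆ W') :
    body G FA FG Z Y X W ⊆ body G FA FG Z' Y' X' W' :=
  Set.union_subset_union
    (Set.union_subset_union (Set.inter_subset_inter_right _ (Pre1_mono G hZ))
      (Pre1_mono G hY))
    (Set.inter_subset_inter_right _
      (Precond_mono G hW (Set.diff_subset_diff_left hX)))

lemma innerW_mono (G : GameGraph Q) (FA FG : Set Q) {Z Z' Y Y' X X' : Set Q}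
    (hZ : Z ⊆ Z') (hY : Y ⊆ Y') (hX : X ⊆ X') :
    innerW G FA FG Z Y X ⊆ innerW G FA FG Z' Y' X' :=
  lfpSet_mono fun W => body_mono G FA FG hZ hY hX (le_refl W)

lemma innerX_mono (G : GameGraph Q) (FA FG : Set Q) {Z Z' Y Y' : Set Q}
    (hZ : Z ⊆ Z') (hY : Y ⊆ Y') :
    innerX G FA FG Z Y ⊆ innerX G FA FG Z' Y' :=
  gfpSet_mono fun X => innerW_mono G FA FG hZ hY (le_refl X)

lemma innerY_mono (G : GameGraph Q) (FA FG : Set Q) {Z Z' : Set Q} (hZ : Z ⊆ Z') :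
    innerY G FA FG Z ⊆ innerY G FA FG Z' :=
  lfpSet_mono fun Y => innerX_mono G FA FG hZ (le_refl Y)

/-- `Z^∞` is a fixed point of the outer `ν`-iteration. -/
lemma phi4_fixed (G : GameGraph Q) (FA FG : Set Q) :
    phi4 G FA FG = innerY G FA FG (phi4 G FA FG) :=
  gfpSet_fixed fun _ _ h => innerY_mono G FA FG h

/-- Stabilization of increasing chains of sets over a finite type. -/
lemma chain_stab [Fintype Q] (g : ℕ → Set Q) (h : ∀ i, g i ⊆ g (i + 1)) :
    ∃ N, g (N + 1) = g N := by
  by_contra hc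
  push_neg at hc
  have hlt : ∀ i, (g i).ncard < (g (i + 1)).ncard := by
    intro i
    exact Set.ncard_lt_ncard ((h i).ssubset_of_ne fun e => hc i e.symm) (Set.toFinite _)
  have hge : ∀ i, i ≤ (g i).ncard := by
    intro i
    induction i with
    | zero => exact Nat.zero_le _
    | succ n ih => exact Nat.lt_of_le_of_lt ih (hlt n)
  have h1 := hge (Fintype.card Q + 1)
  have h2 : (g (Fintype.card Q + 1)).ncard ≤ Fintype.card Q := by
    have := Set.ncard_le_ncard (Set.subset_univ (g (Fintype.card Q + 1))) (Set.toFinite _)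
    simpa [Set.ncard_univ] using this
  omega

variable (G : GameGraph Q) (FA FG : Set Q)

/-- The chain `Yⁱ` is increasing. -/
lemma Yapprox_succ_mono : ∀ i, Yapprox G FA FG i ⊆ Yapprox G FA FG (i + 1) := by
  intro i
  induction i with
  | zero => exact Set.empty_subset _
  | succ n ih => exact innerX_mono G FA FG (le_refl _) ih

/-- Each approximant `Yⁱ` is contained in `Z^∞`. -/
lemma Yapprox_subset_phi4 : ∀ i, Yapprox G FA FG i ⊆ phi4 G FA FG := by
  intro i
  induction i with
  | zero => exact Set.empty_subset _
  | succ n ih =>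
    have hfix : innerX G FA FG (phi4 G FA FG) (innerY G FA FG (phi4 G FA FG)) =
        innerY G FA FG (phi4 G FA FG) :=
      lfpSet_fixed fun _ _ h => innerX_mono G FA FG (le_refl _) h
    calc Yapprox G FA FG (n + 1)
        ⊆ innerX G FA FG (phi4 G FA FG) (innerY G FA FG (phi4 G FA FG)) :=
          innerX_mono G FA FG (le_refl _) (ih.trans (phi4_fixed G FA FG).le)
      _ = innerY G FA FG (phi4 G FA FG) := hfix
      _ = phi4 G FA FG := (phi4_fixed G FA FG).symm

/-- `Z^∞` is exhausted by the approximants `Yⁱ`. -/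
lemma phi4_subset_Yapprox [Fintype Q] : ∃ N, phi4 G FA FG ⊆ Yapprox G FA FG N := by
  obtain ⟨N, hN⟩ := chain_stab (Yapprox G FA FG) (Yapprox_succ_mono G FA FG)
  refine ⟨N, ?_⟩
  have : lfpSet (fun Y => innerX G FA FG (phi4 G FA FG) Y) ⊆ Yapprox G FA FG N :=
    lfpSet_le hN.le
  exact (phi4_fixed G FA FG).le.trans this

/-- `Yⁱ⁺¹` is the least fixed point of the innermost `μW`-iteration. -/
lemma Yapprox_eq_lfpW (k : ℕ) :
    Yapprox G FA FG (k + 1) =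
      lfpSet (fun W => body G FA FG (phi4 G FA FG) (Yapprox G FA FG k)
        (Yapprox G FA FG (k + 1)) W) := by
  have hXfix : Yapprox G FA FG (k + 1) =
      innerW G FA FG (phi4 G FA FG) (Yapprox G FA FG k) (Yapprox G FA FG (k + 1)) :=
    gfpSet_fixed fun _ _ h => innerW_mono G FA FG (le_refl _) (le_refl _) h
  exact hXfix

/-- The chain `Wⁱ_j` is increasing in `j`. -/
lemma Wapprox_succ_mono (i : ℕ) : ∀ j, Wapprox G FA FG i j ⊆ Wapprox G FA FG i (j + 1) := by
  intro j
  induction j with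
  | zero => exact Set.empty_subset _
  | succ n ih => exact body_mono G FA FG (le_refl _) (le_refl _) (le_refl _) ih

/-- Each approximant `Wⁱ⁺¹_j` is contained in `Yⁱ⁺¹`. -/
lemma Wapprox_subset_Yapprox (k : ℕ) :
    ∀ j, Wapprox G FA FG (k + 1) j ⊆ Yapprox G FA FG (k + 1) := by
  intro j
  induction j with
  | zero => exact Set.empty_subset _
  | succ n ih =>
    have hfix : body G FA FG (phi4 G FA FG) (Yapprox G FA FG k)
        (Yapprox G FA FG (k + 1)) (Yapprox G FA FG (k + 1)) = Yapprox G FA FG (k + 1) := by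
      have hlf := Yapprox_eq_lfpW G FA FG k
      have h2 : body G FA FG (phi4 G FA FG) (Yapprox G FA FG k) (Yapprox G FA FG (k + 1))
          (lfpSet (fun W => body G FA FG (phi4 G FA FG) (Yapprox G FA FG k)
            (Yapprox G FA FG (k + 1)) W)) =
          lfpSet (fun W => body G FA FG (phi4 G FA FG) (Yapprox G FA FG k)
            (Yapprox G FA FG (k + 1)) W) :=
        lfpSet_fixed fun _ _ h =>
          body_mono G FA FG (le_refl _) (le_refl _) (le_refl _) h
      rw [← hlf] at h2
      exact h2
    calc Wapprox G FA FG (k + 1) (n + 1)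
        ⊆ body G FA FG (phi4 G FA FG) (Yapprox G FA FG k)
            (Yapprox G FA FG (k + 1)) (Yapprox G FA FG (k + 1)) :=
          body_mono G FA FG (le_refl _) (le_refl _) (le_refl _) ih
      _ = Yapprox G FA FG (k + 1) := hfix

/-- `Yⁱ⁺¹` is exhausted by the approximants `Wⁱ⁺¹_j`. -/
lemma Yapprox_subset_Wapprox [Fintype Q] (k : ℕ) :
    ∃ M, Yapprox G FA FG (k + 1) ⊆ Wapprox G FA FG (k + 1) M := by
  obtain ⟨M, hM⟩ := chain_stab (Wapprox G FA FG (k + 1)) (Wapprox_succ_mono G FA FG (k + 1))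
  refine ⟨M, ?_⟩
  rw [Yapprox_eq_lfpW G FA FG k]
  exact lfpSet_le hM.le

/-- For an environment state, `Pre¹` gives control over all successors. -/
lemma env_pre1 {q : Q} {P : Set Q} (hq : q ∈ G.env) (h : q ∈ G.Pre1 P) :
    G.delta q ⊆ P := by
  simp only [GameGraph.Pre1, Set.mem_union, Set.mem_setOf_eq] at h
  rcases h with h | h
  · exact h.2
  · exact absurd h.1 (Set.disjoint_left.mp G.disjoint_env_sys hq)

/-- Every state of `Z^∞` has a rank. -/
lemma exists_rank [Fintype Q] {q : Q} (hq : q ∈ phi4 G FA FG) :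
    ∃ i j, hasRank G FA FG q i j := by
  classical
  -- minimal i with q ∈ Yⁱ
  obtain ⟨N, hN⟩ := phi4_subset_Yapprox G FA FG
  have hex : ∃ i, q ∈ Yapprox G FA FG i := ⟨N, hN hq⟩
  set i := Nat.find hex with hidef
  have hiY : q ∈ Yapprox G FA FG i := Nat.find_spec hex
  have hipos : 0 < i := by
    rcases Nat.eq_zero_or_pos i with h0 | h
    · exfalso; rw [h0] at hiY; exact hiY
    · exact h
  have hiYnot : q ∉ Yapprox G FA FG (i - 1) :=
    Nat.find_min hex (Nat.sub_lt hipos Nat.one_pos)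
  obtain ⟨k, hk⟩ : ∃ k, i = k + 1 := ⟨i - 1, (Nat.succ_pred_eq_of_pos hipos).symm⟩
  -- minimal j with q ∈ Wⁱ_j
  obtain ⟨M, hM⟩ := Yapprox_subset_Wapprox G FA FG k
  have hexW : ∃ j, q ∈ Wapprox G FA FG i j := ⟨M, by rw [hk]; exact hM (hk ▸ hiY)⟩
  set j := Nat.find hexW with hjdef
  have hjW : q ∈ Wapprox G FA FG i j := Nat.find_spec hexW
  have hjpos : 0 < j := by
    rcases Nat.eq_zero_or_pos j with h0 | h
    · exfalso; rw [h0] at hjW; exact hjW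
    · exact h
  have hjWnot : q ∉ Wapprox G FA FG i (j - 1) :=
    Nat.find_min hexW (Nat.sub_lt hjpos Nat.one_pos)
  exact ⟨i, j, hipos, hjpos, ⟨⟨hiY, hiYnot⟩, hjW, hjWnot⟩⟩

end Aux

/-- Lemma 2 of the paper: the winning region `Z^∞ = ⟦φ₄⟧` is
invariant under play: from every `q ∈ Z^∞`, all environment moves stay in `Z^∞` and
the strategy move `f¹(q)` stays in `Z^∞`. -/
theorem winning_region_invariant {Q : Type*} [Fintype Q] (G : GameGraph Q)
    (FA FG : Set Q) (f : Q → Q) (hf : GoodStrategy G FA FG f) :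
    ∀ q ∈ phi4 G FA FG,
      (q ∈ G.env → G.delta q ⊆ phi4 G FA FG) ∧
        (q ∈ G.sys → f q ∈ phi4 G FA FG) := by
  intro q hq
  constructor
  · -- environment case
    intro henv
    obtain ⟨i, j, hipos, hjpos, ⟨hiY, _⟩, hjW, _⟩ := exists_rank G FA FG hq
    obtain ⟨k, rfl⟩ : ∃ k, i = k + 1 := ⟨i - 1, (Nat.succ_pred_eq_of_pos hipos).symm⟩
    obtain ⟨m, rfl⟩ : ∃ m, j = m + 1 := ⟨j - 1, (Nat.succ_pred_eq_of_pos hjpos).symm⟩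
    have hbody : q ∈ body G FA FG (phi4 G FA FG) (Yapprox G FA FG k)
        (Yapprox G FA FG (k + 1)) (Wapprox G FA FG (k + 1) m) := hjW
    simp only [body, Set.mem_union] at hbody
    rcases hbody with (hb | hb) | hb
    · -- F_G ∩ Pre¹(Z)
      exact env_pre1 G henv hb.2
    · -- Pre¹(Y)
      exact (env_pre1 G henv hb).trans (Yapprox_subset_phi4 G FA FG k)
    · -- F_Aᶜ ∩ Precond(W, X∖F_A)
      have hpre1 := env_pre1 G henv hb.2.2
      refine hpre1.trans (Set.union_subset ?_ ?_)
      · exact (Wapprox_subset_Yapprox G FA FG k m).trans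
          (Yapprox_subset_phi4 G FA FG (k + 1))
      · exact Set.diff_subset.trans (Yapprox_subset_phi4 G FA FG (k + 1))
  · -- system case
    intro hsys
    obtain ⟨i, j, hrank⟩ := exists_rank G FA FG hq
    obtain ⟨-, hr⟩ := hf q hsys hq
    obtain ⟨h11, hne⟩ := hr i j hrank
    by_cases hc : ((i, j) : ℕ × ℕ) = (1, 1)
    · exact h11 hc
    · obtain ⟨i', j', hr', -⟩ := hne hc
      exact Yapprox_subset_phi4 G FA FG i' hr'.2.2.1.1

end GR1
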